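/- arXiv:2303.12288 — 5 statements merged into one kernel-verified Lean document; each statement's English description precedes it below -/
import Mathlib

section
/- One has the factorization identity (s·I_{n+1} + c·F₂)(s·I_{n+1} + c·F₁) = −c₂, where c₂ := −[[s²·I_{n−1} + ((λ+μ)/μ) ξ♯ξᵀ, 0, 0], [0, (μ/(λ+2μ)) s², 0], [0, 0, s²]]. -/
/-!
In the block decomposition `ℂ^{n-1} ⊕ ℂ ⊕ ℂ` both `F₁` and `F₂` are rank one:
`F₁ = (ξ♯/s, i, 0) ⊗ (ξ, i s, 0)` and `F₂ = (ξ♯/s, -i μ/(λ+2μ), 0) ⊗ (ξ, -i s (λ+2μ)/μ, 0)`.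
Since `ξ · ξ♯ = s²`, the two inner factors pair to `s (λ+3μ)/μ`, so `F₂ F₁` is again an
explicit block matrix, and expanding `(s + c F₂)(s + c F₁)` leaves four scalar identities in `c`,
each of which reduces to `c (λ+3μ) = λ+μ`.
-/

noncomputable section

open Matrix

/-- Block matrix `[[T, col, 0], [row, d, 0], [0, 0, e]]` of size `(n+1) × (n+1)`,
with blocks of sizes `n-1, 1, 1`. -/
def blk (n : ℕ) (T : Fin (n-1) → Fin (n-1) → ℂ) (colv rowv : Fin (n-1) → ℂ)
    (d e : ℂ) : Matrix (Fin (n+1)) (Fin (n+1)) ℂ :=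
  Matrix.of fun i j =>
    if hi : (i : ℕ) < n - 1 then
      if hj : (j : ℕ) < n - 1 then T ⟨i, hi⟩ ⟨j, hj⟩
      else if (j : ℕ) = n - 1 then colv ⟨i, hi⟩ else 0
    else if (i : ℕ) = n - 1 then
      if hj : (j : ℕ) < n - 1 then rowv ⟨j, hj⟩
      else if (j : ℕ) = n - 1 then d else 0
    else if (j : ℕ) = n then e else 0

/-- The matrix `F₁ = [[(1/s)ξ♯ξᵀ, i ξ♯, 0], [i ξᵀ, −s, 0], [0, 0, 0]]`. -/
def F1mat (n : ℕ) (ξ ξs : Fin (n-1) → ℝ) (s : ℝ) :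
    Matrix (Fin (n+1)) (Fin (n+1)) ℂ :=
  blk n (fun a b => ((1 / s * ξs a * ξ b : ℝ) : ℂ))
    (fun a => Complex.I * ((ξs a : ℝ) : ℂ))
    (fun b => Complex.I * ((ξ b : ℝ) : ℂ))
    ((-s : ℝ) : ℂ) 0

/-- The matrix `F₂ = [[(1/s)ξ♯ξᵀ, −i((λ+2μ)/μ) ξ♯, 0], [−i(μ/(λ+2μ)) ξᵀ, −s, 0], [0, 0, 0]]`. -/
def F2mat (n : ℕ) (ξ ξs : Fin (n-1) → ℝ) (s lam mu : ℝ) :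
    Matrix (Fin (n+1)) (Fin (n+1)) ℂ :=
  blk n (fun a b => ((1 / s * ξs a * ξ b : ℝ) : ℂ))
    (fun a => -(Complex.I * (((lam + 2*mu)/mu * ξs a : ℝ) : ℂ)))
    (fun b => -(Complex.I * ((mu/(lam + 2*mu) * ξ b : ℝ) : ℂ)))
    ((-s : ℝ) : ℂ) 0

/-- `b₁ = i(λ+μ)·[[0, (1/μ) ξ♯, 0], [(1/(λ+2μ)) ξᵀ, 0, 0], [0, 0, 0]]`. -/
def b1mat (n : ℕ) (ξ ξs : Fin (n-1) → ℝ) (lam mu : ℝ) :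
    Matrix (Fin (n+1)) (Fin (n+1)) ℂ :=
  (Complex.I * ((lam + mu : ℝ) : ℂ)) •
    blk n (fun _ _ => 0)
      (fun a => ((1/mu * ξs a : ℝ) : ℂ))
      (fun b => ((1/(lam + 2*mu) * ξ b : ℝ) : ℂ)) 0 0

/-- `c₂ = −[[s²·I + ((λ+μ)/μ) ξ♯ξᵀ, 0, 0], [0, (μ/(λ+2μ)) s², 0], [0, 0, s²]]`. -/
def c2mat (n : ℕ) (ξ ξs : Fin (n-1) → ℝ) (s lam mu : ℝ) :
    Matrix (Fin (n+1)) (Fin (n+1)) ℂ :=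
  -(blk n
      (fun a b => ((s^2 * (if a = b then 1 else 0) + (lam + mu)/mu * ξs a * ξ b : ℝ) : ℂ))
      (fun _ => 0) (fun _ => 0)
      ((mu/(lam + 2*mu) * s^2 : ℝ) : ℂ) ((s^2 : ℝ) : ℂ))

/-- The principal symbol `p₁` of the thermoelastic Dirichlet-to-Neumann map. -/
def p1mat (n : ℕ) (ξ ξs : Fin (n-1) → ℝ) (s lam mu al : ℝ) :
    Matrix (Fin (n+1)) (Fin (n+1)) ℂ :=
  blk n
    (fun a b => ((mu * s * (if a = b then 1 else 0)
        + mu * (lam + mu)/((lam + 3*mu) * s) * ξs a * ξ b : ℝ) : ℂ))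
    (fun a => -(Complex.I * ((2 * mu^2/(lam + 3*mu) * ξs a : ℝ) : ℂ)))
    (fun b => Complex.I * ((2 * mu^2/(lam + 3*mu) * ξ b : ℝ) : ℂ))
    ((2 * mu * (lam + 2*mu)/(lam + 3*mu) * s : ℝ) : ℂ)
    ((al * s : ℝ) : ℂ)

/-- `A = blockdiag(μ·I, λ+2μ, α)`. -/
def Amat (n : ℕ) (lam mu al : ℝ) : Matrix (Fin (n+1)) (Fin (n+1)) ℂ :=
  blk n (fun a b => if a = b then ((mu : ℝ) : ℂ) else 0)
    (fun _ => 0) (fun _ => 0) ((lam + 2*mu : ℝ) : ℂ) ((al : ℝ) : ℂ)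

/-- `d₁ = [[0, iμ ξ♯, 0], [iλ ξᵀ, 0, 0], [0, 0, 0]]`. -/
def d1mat (n : ℕ) (ξ ξs : Fin (n-1) → ℝ) (lam mu : ℝ) :
    Matrix (Fin (n+1)) (Fin (n+1)) ℂ :=
  blk n (fun _ _ => 0)
    (fun a => Complex.I * ((mu * ξs a : ℝ) : ℂ))
    (fun b => Complex.I * ((lam * ξ b : ℝ) : ℂ)) 0 0

/-- `W = blockdiag(G⁻¹, 1, 1)`. -/
def Wmat (n : ℕ) (G : Matrix (Fin (n-1)) (Fin (n-1)) ℝ) :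
    Matrix (Fin (n+1)) (Fin (n+1)) ℂ :=
  blk n (fun a b => ((G⁻¹ a b : ℝ) : ℂ)) (fun _ => 0) (fun _ => 0) 1 1


lemma smul_one_add_mul_smul_one_add {R M : Type*} [CommSemiring R] [Semiring M] [Algebra R M]
    (x y : R) (A B : M) :
    (x • 1 + y • B) * (x • 1 + y • A) = (x * x) • 1 + (x * y) • (A + B) + (y * y) • (B * A) := by
  simp only [add_mul, mul_add, smul_mul_smul_comm, one_mul, mul_one, smul_add, mul_comm y]
  abel

def blkVec (n : ℕ) (x : Fin (n-1) → ℂ) (a b : ℂ) : Fin (n+1) → ℂ :=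
  fun i => if hi : (i : ℕ) < n - 1 then x ⟨i, hi⟩ else if (i : ℕ) = n - 1 then a else b

section BlockCalculus

variable {n : ℕ}

lemma blk_congr {T T' : Fin (n-1) → Fin (n-1) → ℂ} {cv cv' rv rv' : Fin (n-1) → ℂ}
    {d d' e e' : ℂ} (hT : ∀ a b, T a b = T' a b) (hc : ∀ a, cv a = cv' a)
    (hr : ∀ b, rv b = rv' b) (hd : d = d') (he : e = e') :
    blk n T cv rv d e = blk n T' cv' rv' d' e' := by
  have hT' : T = T' := funext₂ hT
  rw [hT', funext hc, funext hr, hd, he]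

lemma blk_add (T T' : Fin (n-1) → Fin (n-1) → ℂ) (cv cv' rv rv' : Fin (n-1) → ℂ)
    (d d' e e' : ℂ) :
    blk n T cv rv d e + blk n T' cv' rv' d' e' =
      blk n (T + T') (cv + cv') (rv + rv') (d + d') (e + e') := by
  ext i j
  simp only [blk, Matrix.add_apply, of_apply]
  split_ifs <;> simp

lemma smul_blk (z : ℂ) (T : Fin (n-1) → Fin (n-1) → ℂ) (cv rv : Fin (n-1) → ℂ) (d e : ℂ) :
    z • blk n T cv rv d e = blk n (z • T) (z • cv) (z • rv) (z * d) (z * e) := by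
  ext i j
  simp only [blk, Matrix.smul_apply, of_apply]
  split_ifs <;> simp

lemma one_eq_blk :
    (1 : Matrix (Fin (n+1)) (Fin (n+1)) ℂ) = blk n (fun a b => if a = b then 1 else 0) 0 0 1 1 := by
  ext i j
  simp only [blk, one_apply, of_apply, Fin.ext_iff]
  split_ifs <;> first | rfl | omega

lemma vecMulVec_blkVec (x y : Fin (n-1) → ℂ) (a b : ℂ) :
    vecMulVec (blkVec n x a 0) (blkVec n y b 0) =
      blk n (vecMulVec x y) (fun i => x i * b) (fun j => a * y j) (a * b) 0 := by
  ext i j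
  simp only [blk, blkVec, vecMulVec_apply, of_apply]
  split_ifs <;> simp

lemma smul_blkVec (r : ℂ) (x : Fin (n-1) → ℂ) (a b : ℂ) :
    r • blkVec n x a b = blkVec n (r • x) (r * a) (r * b) := by
  ext i
  simp only [blkVec, Pi.smul_apply, smul_eq_mul]
  split_ifs <;> rfl

lemma blkVec_dotProduct (x y : Fin (n-1) → ℂ) (a b : ℂ) :
    blkVec n x a 0 ⬝ᵥ blkVec n y b 0 = x ⬝ᵥ y + a * b := by
  cases n with
  | zero => simp [dotProduct, blkVec]
  | succ m => simp [dotProduct, blkVec, Fin.sum_univ_castSucc]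

end BlockCalculus

open Complex

section RankOne

variable {n : ℕ} {ξ ξs : Fin (n-1) → ℝ} {s lam mu : ℝ}

lemma F1mat_eq_vecMulVec (hs : s ≠ 0) :
    F1mat n ξ ξs s = vecMulVec (blkVec n (fun a => ((ξs a / s : ℝ) : ℂ)) I 0)
      (blkVec n (fun b => (ξ b : ℂ)) (I * s) 0) := by
  have hsC : (s : ℂ) ≠ 0 := ofReal_ne_zero.2 hs
  rw [F1mat, vecMulVec_blkVec]
  refine blk_congr (fun a b => ?_) (fun a => ?_) (fun b => ?_) ?_ rfl
    <;> push_cast [vecMulVec_apply]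
  · ring
  · field_simp
  · rfl
  · linear_combination (-(s : ℂ)) * I_sq

lemma F2mat_eq_vecMulVec (hs : s ≠ 0) (hmu : mu ≠ 0) (hl : lam + 2 * mu ≠ 0) :
    F2mat n ξ ξs s lam mu =
      vecMulVec (blkVec n (fun a => ((ξs a / s : ℝ) : ℂ)) (-I * (mu / (lam + 2 * mu) : ℝ)) 0)
        (blkVec n (fun b => (ξ b : ℂ)) (-I * ((lam + 2 * mu) / mu * s : ℝ)) 0) := by
  have hsC : (s : ℂ) ≠ 0 := ofReal_ne_zero.2 hs
  have hmuC : (mu : ℂ) ≠ 0 := ofReal_ne_zero.2 hmu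
  have hlC : (lam + 2 * mu : ℂ) ≠ 0 := by exact_mod_cast hl
  rw [F2mat, vecMulVec_blkVec]
  refine blk_congr (fun a b => ?_) (fun a => ?_) (fun b => ?_) ?_ rfl
    <;> push_cast [vecMulVec_apply]
  · ring
  · field_simp
  · ring
  · have hk : (mu / (lam + 2 * mu) * ((lam + 2 * mu) / mu) : ℂ) = 1 := by
      rw [div_mul_div_comm, mul_comm (mu : ℂ), div_self (mul_ne_zero hlC hmuC)]
    linear_combination (-(s : ℂ)) * I_sq - I ^ 2 * s * hk

lemma F2mat_mul_F1mat (hs : s ≠ 0) (hs2 : ξ ⬝ᵥ ξs = s ^ 2) (hmu : mu ≠ 0)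
    (hl : lam + 2 * mu ≠ 0) :
    F2mat n ξ ξs s lam mu * F1mat n ξ ξs s =
      blk n (fun a b => (((lam + 3 * mu) / mu * ξs a * ξ b : ℝ) : ℂ))
        (fun a => I * ((s * ((lam + 3 * mu) / mu) * ξs a : ℝ) : ℂ))
        (fun b => -(I * ((s * ((lam + 3 * mu) / (lam + 2 * mu)) * ξ b : ℝ) : ℂ)))
        (((lam + 3 * mu) / (lam + 2 * mu) * s ^ 2 : ℝ) : ℂ) 0 := by
  have hsC : (s : ℂ) ≠ 0 := ofReal_ne_zero.2 hs
  have hmuC : (mu : ℂ) ≠ 0 := ofReal_ne_zero.2 hmu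
  have hlC : (lam + 2 * mu : ℂ) ≠ 0 := by exact_mod_cast hl
  have hdot : (fun b => (ξ b : ℂ)) ⬝ᵥ (fun a => ((ξs a / s : ℝ) : ℂ)) = s := by
    have : ξ ⬝ᵥ (fun a => ξs a / s) = s := by
      simp only [dotProduct, mul_div_assoc', ← Finset.sum_div]
      rw [← dotProduct, hs2, sq, mul_div_cancel_right₀ _ hs]
    exact (RingHom.map_dotProduct ofRealHom _ _).symm.trans (congrArg ofRealHom this)
  have hr : (s + -I * ((lam + 2 * mu) / mu * s : ℝ) * I : ℂ) = ((lam + 3 * mu) / mu * s : ℝ) := by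
    have hk : (lam + 3 * mu) / mu * s = s + (lam + 2 * mu) / mu * s := by field_simp; ring
    have hkC := congrArg ofReal hk
    push_cast at hkC ⊢
    linear_combination (-((lam + 2 * mu) / mu * s : ℂ)) * I_sq - hkC
  rw [F2mat_eq_vecMulVec hs hmu hl, F1mat_eq_vecMulVec hs, vecMulVec_mul_vecMulVec,
    blkVec_dotProduct, hdot, hr, smul_blkVec, mul_zero, vecMulVec_blkVec]
  refine blk_congr (fun a b => ?_) (fun a => ?_) (fun b => ?_) ?_ rfl
    <;> push_cast [vecMulVec_apply, Pi.smul_apply, smul_eq_mul]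
    <;> field_simp
  rw [I_sq]
  ring

end RankOne

lemma lame_coeff_identities {lam mu c : ℝ} (hmu : mu ≠ 0) (hl2 : lam + 2 * mu ≠ 0)
    (hl3 : lam + 3 * mu ≠ 0) (hc : c = (lam + mu) / (lam + 3 * mu)) :
    (2 * c + c ^ 2 * ((lam + 3 * mu) / mu) : ℂ) = (lam + mu) / mu ∧
    (c * (1 - (lam + 2 * mu) / mu) + c ^ 2 * ((lam + 3 * mu) / mu) : ℂ) = 0 ∧
    (c * (1 - mu / (lam + 2 * mu)) - c ^ 2 * ((lam + 3 * mu) / (lam + 2 * mu)) : ℂ) = 0 ∧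
    (1 - 2 * c + c ^ 2 * ((lam + 3 * mu) / (lam + 2 * mu)) : ℂ) = mu / (lam + 2 * mu) := by
  have hc' : c * (lam + 3 * mu) = lam + mu := by rw [hc, div_mul_cancel₀ _ hl3]
  refine ⟨?_, ?_, ?_, ?_⟩ <;> norm_cast
  · field_simp
    linear_combination (c + 1) * hc'
  · field_simp
    linear_combination c * hc'
  · rw [one_sub_div hl2]
    linear_combination (-c / (lam + 2 * mu)) * hc'
  · field_simp
    linear_combination (c - 1) * hc'

theorem stmt3_general (n : ℕ)
    (G : Matrix (Fin (n-1)) (Fin (n-1)) ℝ) (hG : G.PosDef)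
    (ξ : Fin (n-1) → ℝ) (hξ : ξ ≠ 0)
    (ξs : Fin (n-1) → ℝ) (hξs : ξs = G.mulVec ξ)
    (s : ℝ) (hs : s = Real.sqrt (ξ ⬝ᵥ G.mulVec ξ))
    (lam mu : ℝ) (hmu : 0 < mu) (hlm : 0 ≤ lam + mu)
    (c : ℝ) (hc : c = (lam + mu)/(lam + 3*mu)) :
    ((s : ℂ) • (1 : Matrix (Fin (n+1)) (Fin (n+1)) ℂ) + (c : ℂ) • F2mat n ξ ξs s lam mu)
      * ((s : ℂ) • (1 : Matrix (Fin (n+1)) (Fin (n+1)) ℂ) + (c : ℂ) • F1mat n ξ ξs s)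
    = -(c2mat n ξ ξs s lam mu) := by
  have hquad : 0 < ξ ⬝ᵥ G *ᵥ ξ := by simpa using hG.dotProduct_mulVec_pos hξ
  have hs0 : s ≠ 0 := hs ▸ (Real.sqrt_pos.2 hquad).ne'
  have hs2 : ξ ⬝ᵥ ξs = s ^ 2 := by rw [hs, Real.sq_sqrt hquad.le, hξs]
  have hl2 : lam + 2 * mu ≠ 0 := by linarith
  have hl3 : lam + 3 * mu ≠ 0 := by linarith
  rw [smul_one_add_mul_smul_one_add, F2mat_mul_F1mat hs0 hs2 hmu.ne' hl2, F1mat, F2mat,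
    one_eq_blk, blk_add, smul_blk, smul_blk, smul_blk, blk_add, blk_add, c2mat, neg_neg]
  obtain ⟨hT, hcol, hrow, hd⟩ := lame_coeff_identities hmu.ne' hl2 hl3 hc
  have hss : (s : ℂ) * (1 / s) = 1 := mul_one_div_cancel (ofReal_ne_zero.2 hs0)
  refine blk_congr (fun a b => ?_) (fun a => ?_) (fun b => ?_) ?_ ?_ <;>
    push_cast [Pi.add_apply, Pi.smul_apply, Pi.zero_apply, smul_eq_mul]
  · split_ifs <;> push_cast <;>
      linear_combination (ξs a * ξ b : ℂ) * hT + (2 * c * ξs a * ξ b : ℂ) * hss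
  · linear_combination (I * s * ξs a) * hcol
  · linear_combination (I * s * ξ b) * hrow
  · linear_combination (s : ℂ) ^ 2 * hd
  · ring

/-- (s·I + c·F₂)(s·I + c·F₁) = −c₂. -/
theorem stmt3 (n : ℕ) (hn : 2 ≤ n)
    (G : Matrix (Fin (n-1)) (Fin (n-1)) ℝ) (hG : G.PosDef)
    (ξ : Fin (n-1) → ℝ) (hξ : ξ ≠ 0)
    (ξs : Fin (n-1) → ℝ) (hξs : ξs = G.mulVec ξ)
    (s : ℝ) (hs : s = Real.sqrt (ξ ⬝ᵥ G.mulVec ξ))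
    (lam mu : ℝ) (hmu : 0 < mu) (hlm : 0 ≤ lam + mu)
    (c : ℝ) (hc : c = (lam + mu)/(lam + 3*mu)) :
    ((s : ℂ) • (1 : Matrix (Fin (n+1)) (Fin (n+1)) ℂ) + (c : ℂ) • F2mat n ξ ξs s lam mu)
      * ((s : ℂ) • (1 : Matrix (Fin (n+1)) (Fin (n+1)) ℂ) + (c : ℂ) • F1mat n ξ ξs s)
    = -(c2mat n ξ ξs s lam mu) :=
  stmt3_general n G hG ξ hξ ξs hξs s hs lam mu hmu hlm c hc
end
end

section
/- The matrix q₁ := s·I_{n+1} + c·F₁ solves the principal symbol equation q₁² − b₁·q₁ + c₂ = 0, where b₁ := i(λ+μ)·[[0, (1/μ) ξ♯, 0], [(1/(λ+2μ)) ξᵀ, 0, 0], [0, 0, 0]] and c₂ := −[[s²·I_{n−1} + ((λ+μ)/μ) ξ♯ξᵀ, 0, 0], [0, (μ/(λ+2μ)) s², 0], [0, 0, s²]]. -/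
noncomputable section

open Matrix

/-!
`F₁ = s⁻¹ · u vᵀ` with `u = (ξ♯, i s, 0)` and `v = (ξ, i s, 0)`, and `vᵀ u = ξ · ξ♯ − s² = 0`, so
`F₁² = 0` and `q₁² = s² I + 2 s c F₁`. The equation then becomes
`s² I + 2 s c F₁ − s b₁ − c b₁ F₁ + c₂ = 0`, which, computed block by block, holds exactly
because `c (λ + 3μ) = λ + μ`.
-/

theorem smul_one_add_smul_sq_of_mul_self_eq_zero {R A : Type*} [CommSemiring R] [Semiring A]
    [Algebra R A] {F : A} (hF : F * F = 0) (a b : R) :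
    (a • 1 + b • F) ^ 2 = a ^ 2 • 1 + (2 * a * b) • F := by
  simp only [sq, add_mul, mul_add, smul_mul_smul_comm, one_mul, mul_one, hF, smul_zero, add_zero]
  module

theorem ofReal_comp_dotProduct {ι : Type*} [Fintype ι] (v w : ι → ℝ) :
    (Complex.ofReal ∘ v) ⬝ᵥ (Complex.ofReal ∘ w) = ((v ⬝ᵥ w : ℝ) : ℂ) :=
  (Complex.ofRealHom.map_dotProduct v w).symm

theorem Fin.eq_castSucc_castSucc_or_eq_castSucc_last_or_eq_last {m : ℕ} (i : Fin (m + 2)) :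
    (∃ a : Fin m, i = a.castSucc.castSucc) ∨ i = (Fin.last m).castSucc ∨ i = Fin.last (m + 1) := by
  induction i using Fin.lastCases with
  | last => exact .inr (.inr rfl)
  | cast i =>
    induction i using Fin.lastCases with
    | last => exact .inr (.inl rfl)
    | cast a => exact .inl ⟨a, rfl⟩

/- The block lemmas are stated for `blk (m + 1)` with blocks over `Fin m` rather than `Fin (n - 1)`:
`Fin (m + 1 - 1)` and `Fin m` agree only after unfolding `Nat.sub`, so `simp` would not match them.
In the names, `top`, `mid` and `last` are the index blocks `{0, …, m - 1}`, `{m}` and `{m + 1}`. -/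
section Blocks

variable {m : ℕ} (T T' : Matrix (Fin m) (Fin m) ℂ) (u u' v v' : Fin m → ℂ) (d d' e e' : ℂ)

theorem blk_zero : blk (m + 1) (0 : Matrix (Fin m) (Fin m) ℂ) 0 0 0 0 = 0 := by
  ext i j
  simp only [blk, of_apply, Pi.zero_apply, Matrix.zero_apply]
  split_ifs <;> rfl

theorem blk_add_s4 : blk (m + 1) T u v d e + blk (m + 1) T' u' v' d' e' =
    blk (m + 1) (T + T') (u + u') (v + v') (d + d') (e + e') := by
  ext i j
  simp only [blk, of_apply, Matrix.add_apply, Pi.add_apply]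
  split_ifs <;> simp

theorem blk_smul (r : ℂ) :
    r • blk (m + 1) T u v d e = blk (m + 1) (r • T) (r • u) (r • v) (r * d) (r * e) := by
  ext i j
  simp only [blk, of_apply, Matrix.smul_apply, Pi.smul_apply, smul_eq_mul]
  split_ifs <;> simp

theorem blk_neg : -blk (m + 1) T u v d e = blk (m + 1) (-T) (-u) (-v) (-d) (-e) := by
  ext i j
  simp only [blk, of_apply, Matrix.neg_apply, Pi.neg_apply]
  split_ifs <;> simp

@[simp] theorem blk_apply_top_top (a b : Fin m) :
    blk (m + 1) T u v d e a.castSucc.castSucc b.castSucc.castSucc = T a b := by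
  simp [blk]

@[simp] theorem blk_apply_top_mid (a : Fin m) :
    blk (m + 1) T u v d e a.castSucc.castSucc (Fin.last m).castSucc = u a := by
  simp [blk]

@[simp] theorem blk_apply_top_last (a : Fin m) :
    blk (m + 1) T u v d e a.castSucc.castSucc (Fin.last (m + 1)) = 0 := by
  simp [blk]

@[simp] theorem blk_apply_mid_top (b : Fin m) :
    blk (m + 1) T u v d e (Fin.last m).castSucc b.castSucc.castSucc = v b := by
  simp [blk]

@[simp] theorem blk_apply_mid_mid :
    blk (m + 1) T u v d e (Fin.last m).castSucc (Fin.last m).castSucc = d := by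
  simp [blk]

@[simp] theorem blk_apply_mid_last :
    blk (m + 1) T u v d e (Fin.last m).castSucc (Fin.last (m + 1)) = 0 := by
  simp [blk]

@[simp] theorem blk_apply_last_top (b : Fin m) :
    blk (m + 1) T u v d e (Fin.last (m + 1)) b.castSucc.castSucc = 0 := by
  simp [blk, (Nat.lt_succ_of_lt b.isLt).ne]

@[simp] theorem blk_apply_last_mid :
    blk (m + 1) T u v d e (Fin.last (m + 1)) (Fin.last m).castSucc = 0 := by
  simp [blk]

@[simp] theorem blk_apply_last_last :
    blk (m + 1) T u v d e (Fin.last (m + 1)) (Fin.last (m + 1)) = e := by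
  simp [blk]

theorem one_eq_blk_s4 :
    (1 : Matrix (Fin (m + 1 + 1)) (Fin (m + 1 + 1)) ℂ) =
      blk (m + 1) (1 : Matrix (Fin m) (Fin m) ℂ) 0 0 1 1 := by
  ext i j
  rcases Fin.eq_castSucc_castSucc_or_eq_castSucc_last_or_eq_last i with ⟨a, rfl⟩ | rfl | rfl <;>
  rcases Fin.eq_castSucc_castSucc_or_eq_castSucc_last_or_eq_last j with ⟨b, rfl⟩ | rfl | rfl <;>
  simp [one_apply, Fin.castSucc_ne_last, (Fin.castSucc_ne_last _).symm]

theorem blk_mul : blk (m + 1) T u v d e * blk (m + 1) T' u' v' d' e' =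
    blk (m + 1) (T * T' + vecMulVec u v') (T *ᵥ u' + d' • u) (v ᵥ* T' + d • v')
      (v ⬝ᵥ u' + d * d') (e * e') := by
  ext i j
  rcases Fin.eq_castSucc_castSucc_or_eq_castSucc_last_or_eq_last i with ⟨a, rfl⟩ | rfl | rfl <;>
  rcases Fin.eq_castSucc_castSucc_or_eq_castSucc_last_or_eq_last j with ⟨b, rfl⟩ | rfl | rfl <;>
  simp [mul_apply, Fin.sum_univ_castSucc, vecMulVec_apply, mulVec, vecMul, dotProduct, mul_comm]

end Blocks

section Symbols

open Complex

variable {m : ℕ} (ξ ξs : Fin m → ℝ) (s lam mu : ℝ)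

theorem F1mat_eq_blk : F1mat (m + 1) ξ ξs s =
    blk (m + 1) ((s : ℂ)⁻¹ • vecMulVec (ofReal ∘ ξs) (ofReal ∘ ξ)) (I • (ofReal ∘ ξs))
      (I • (ofReal ∘ ξ)) (-s) 0 := by
  ext i j
  simp only [F1mat, blk, of_apply]
  split_ifs <;> simp [vecMulVec_apply, mul_assoc]

theorem b1mat_eq_blk : b1mat (m + 1) ξ ξs lam mu =
    (I * (lam + mu)) • blk (m + 1) (0 : Matrix (Fin m) (Fin m) ℂ) ((mu : ℂ)⁻¹ • (ofReal ∘ ξs))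
      (((lam : ℂ) + 2 * mu)⁻¹ • (ofReal ∘ ξ)) 0 0 := by
  ext i j
  simp only [b1mat, blk, of_apply, Matrix.smul_apply]
  split_ifs <;> simp

theorem c2mat_eq_blk : c2mat (m + 1) ξ ξs s lam mu =
    -blk (m + 1) ((s : ℂ) ^ 2 • (1 : Matrix (Fin m) (Fin m) ℂ)
        + (((lam : ℂ) + mu) / mu) • vecMulVec (ofReal ∘ ξs) (ofReal ∘ ξ)) 0 0
      (mu / (lam + 2 * mu) * s ^ 2) (s ^ 2) := by
  ext i j
  simp only [c2mat, blk, of_apply, Matrix.neg_apply]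
  split_ifs <;> simp_all [one_apply, vecMulVec_apply, mul_assoc, Fin.ext_iff]

variable {ξ ξs s lam mu}

theorem F1mat_mul_self (hs : s ≠ 0) (hdot : ξ ⬝ᵥ ξs = s ^ 2) :
    F1mat (m + 1) ξ ξs s * F1mat (m + 1) ξ ξs s = 0 := by
  have hdot' : (ofReal ∘ ξ) ⬝ᵥ (ofReal ∘ ξs) = (s : ℂ) ^ 2 := by
    rw [ofReal_comp_dotProduct, hdot, ofReal_pow]
  have hs' : (s : ℂ) ≠ 0 := ofReal_ne_zero.mpr hs
  rw [F1mat_eq_blk, blk_mul, ← blk_zero]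
  congr 1
  · rw [smul_mul_smul_comm, vecMulVec_mul_vecMulVec, hdot', smul_vecMulVec, vecMulVec_smul]
    ext a b
    simp only [vecMulVec_smul, Matrix.add_apply, Matrix.smul_apply, vecMulVec_apply,
      Function.comp_apply, smul_eq_mul, Matrix.zero_apply]
    field_simp
    linear_combination (ξs a * ξ b : ℂ) * I_sq
  · rw [smul_mulVec, mulVec_smul, vecMulVec_mulVec, hdot', op_smul_eq_smul]
    ext a
    simp only [neg_smul, coe_smul, Pi.add_apply, Pi.smul_apply, Function.comp_apply, smul_eq_mul,
      Pi.neg_apply, real_smul, Pi.zero_apply]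
    field_simp
    ring
  · rw [vecMul_smul, smul_vecMul, vecMul_vecMulVec, hdot']
    ext a
    simp only [neg_smul, coe_smul, Pi.add_apply, Pi.smul_apply, Function.comp_apply, smul_eq_mul,
      Pi.neg_apply, real_smul, Pi.zero_apply]
    field_simp
    ring
  · rw [smul_dotProduct, dotProduct_smul, hdot']
    simp only [smul_eq_mul, mul_neg, neg_mul, neg_neg]
    linear_combination (s ^ 2 : ℂ) * I_sq
  · simp

theorem principal_symbol_equation {c : ℝ} (hs : s ≠ 0) (hdot : ξ ⬝ᵥ ξs = s ^ 2) (hmu : mu ≠ 0)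
    (hlm : lam + 2 * mu ≠ 0) (hc : c * (lam + 3 * mu) = lam + mu) :
    ((s : ℂ) • (1 : Matrix (Fin (m + 1 + 1)) (Fin (m + 1 + 1)) ℂ)
        + (c : ℂ) • F1mat (m + 1) ξ ξs s) ^ 2
      - b1mat (m + 1) ξ ξs lam mu
        * ((s : ℂ) • (1 : Matrix (Fin (m + 1 + 1)) (Fin (m + 1 + 1)) ℂ)
          + (c : ℂ) • F1mat (m + 1) ξ ξs s)
      + c2mat (m + 1) ξ ξs s lam mu = 0 := by
  have hs' : (s : ℂ) ≠ 0 := by exact_mod_cast hs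
  have hmu' : (mu : ℂ) ≠ 0 := by exact_mod_cast hmu
  have hlm' : (lam : ℂ) + 2 * mu ≠ 0 := by exact_mod_cast hlm
  have hc' : (c : ℂ) * (lam + 3 * mu) = lam + mu := by exact_mod_cast hc
  rw [smul_one_add_smul_sq_of_mul_self_eq_zero (F1mat_mul_self hs hdot), mul_add, mul_smul_comm,
    mul_smul_comm, mul_one]
  simp only [F1mat_eq_blk, b1mat_eq_blk, c2mat_eq_blk, one_eq_blk_s4, blk_mul, blk_smul, blk_add_s4,
    blk_neg, sub_eq_add_neg]
  rw [← blk_zero]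
  congr 1
  · ext a b
    simp only [smul_zero, Algebra.mul_smul_comm, zero_mul, vecMulVec_smul, smul_vecMulVec, zero_add,
      coe_smul, neg_add_rev, Matrix.add_apply, Matrix.smul_apply, one_apply, smul_eq_mul, mul_ite,
      mul_one, mul_zero, vecMulVec_apply, Function.comp_apply, Matrix.neg_apply, real_smul,
      Matrix.zero_apply]
    field_simp
    linear_combination (ξs a * ξ b : ℂ) * hc' - (c * ξs a * ξ b * (lam + mu) : ℂ) * I_sq
  · ext a
    simp only [smul_zero, zero_add, coe_smul, zero_mulVec, neg_smul, smul_neg, neg_add_rev, neg_neg,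
      neg_zero, Pi.add_apply, Pi.smul_apply, Function.comp_apply, smul_eq_mul, real_smul,
      Pi.neg_apply, Pi.zero_apply, add_zero]
    field_simp
    linear_combination (s * I * ξs a : ℂ) * hc'
  · simp only [vecMul_smul, vecMul_vecMulVec, smul_dotProduct, ofReal_comp_dotProduct, hdot]
    ext a
    simp only [smul_zero, zero_add, coe_smul, ofReal_pow, smul_eq_mul, mul_zero, zero_smul,
      add_zero, neg_add_rev, neg_zero, Pi.add_apply, Pi.smul_apply, Function.comp_apply, Pi.neg_apply,
      real_smul, Pi.zero_apply]
    field_simp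
    linear_combination (s * I * ξ a : ℂ) * hc'
  · simp only [mul_one, mul_neg, mul_zero, dotProduct_smul, smul_dotProduct, ofReal_comp_dotProduct,
      hdot, ofReal_pow, smul_eq_mul, zero_mul, neg_zero, add_zero, zero_add]
    field_simp
    linear_combination (-s ^ 2 : ℂ) * hc' - (s ^ 2 * c * (lam + mu) : ℂ) * I_sq
  · ring

end Symbols

/-- q₁ solves the principal symbol equation q₁² − b₁q₁ + c₂ = 0. -/
theorem stmt4 (n : ℕ) (hn : 2 ≤ n)
    (G : Matrix (Fin (n-1)) (Fin (n-1)) ℝ) (hG : G.PosDef)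
    (ξ : Fin (n-1) → ℝ) (hξ : ξ ≠ 0)
    (ξs : Fin (n-1) → ℝ) (hξs : ξs = G.mulVec ξ)
    (s : ℝ) (hs : s = Real.sqrt (ξ ⬝ᵥ G.mulVec ξ))
    (lam mu : ℝ) (hmu : 0 < mu) (hlm : 0 ≤ lam + mu)
    (c : ℝ) (hc : c = (lam + mu)/(lam + 3*mu)) :
    ((s : ℂ) • (1 : Matrix (Fin (n+1)) (Fin (n+1)) ℂ) + (c : ℂ) • F1mat n ξ ξs s) ^ 2
      - b1mat n ξ ξs lam mu
        * ((s : ℂ) • (1 : Matrix (Fin (n+1)) (Fin (n+1)) ℂ) + (c : ℂ) • F1mat n ξ ξs s)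
      + c2mat n ξ ξs s lam mu = 0 := by
  obtain ⟨m, rfl⟩ : ∃ m, n = m + 1 := ⟨n - 1, by omega⟩
  have hq : 0 < ξ ⬝ᵥ G *ᵥ ξ := hG.dotProduct_mulVec_pos hξ
  have hs0 : s ≠ 0 := by
    rw [hs]
    exact (Real.sqrt_pos.mpr hq).ne'
  have hdot : ξ ⬝ᵥ ξs = s ^ 2 := by rw [hs, Real.sq_sqrt hq.le, hξs]
  have hc' : c * (lam + 3 * mu) = lam + mu := by
    rw [hc]
    exact div_mul_cancel₀ _ (by linarith)
  exact principal_symbol_equation (m := m) hs0 hdot hmu.ne' (by linarith) hc'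
end
end

section
/- Let N ≥ 1, let s be a nonzero complex number, and let A, B, E be N×N complex matrices with A² = 0 and B² = 0. Then the matrix X := (1/(2s))·E − (1/(4s²))·(A·E + E·B) + (1/(4s³))·A·E·B satisfies the Sylvester equation (s·I_N + A)·X + X·(s·I_N + B) = E. -/
open Matrix

/-- explicit solution of the Sylvester equation with square-zero perturbations. -/
theorem stmt6 (N : ℕ) (hN : 1 ≤ N) (s : ℂ) (hs : s ≠ 0)
    (A B E : Matrix (Fin N) (Fin N) ℂ) (hA : A ^ 2 = 0) (hB : B ^ 2 = 0) :
    (s • (1 : Matrix (Fin N) (Fin N) ℂ) + A)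
        * ((1/(2*s)) • E - (1/(4*s^2)) • (A * E + E * B) + (1/(4*s^3)) • (A * E * B))
      + ((1/(2*s)) • E - (1/(4*s^2)) • (A * E + E * B) + (1/(4*s^3)) • (A * E * B))
        * (s • (1 : Matrix (Fin N) (Fin N) ℂ) + B)
    = E := by
  have hA' : A * A = 0 := by rw [← pow_two]; exact hA
  have hB' : B * B = 0 := by rw [← pow_two]; exact hB
  have hAAE : A * (A * E) = 0 := by rw [← mul_assoc, hA', zero_mul]
  have hEBB : E * B * B = 0 := by rw [mul_assoc, hB', mul_zero]
  have hAAEB : A * (A * E * B) = 0 := by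
    rw [← mul_assoc, ← mul_assoc, hA', zero_mul, zero_mul]
  have hAEBB : A * E * B * B = 0 := by rw [mul_assoc, hB', mul_zero]
  simp only [mul_add, add_mul, mul_sub, sub_mul, Matrix.mul_smul, Matrix.smul_mul,
    smul_smul, mul_one, one_mul, mul_assoc, hAAE, hAAEB, hEBB, hAEBB, smul_zero,
    ← mul_assoc]
  simp only [hAAE, hAAEB, hEBB, hAEBB, smul_zero, sub_zero, add_zero, zero_add,
    mul_assoc A E B]
  rw [← sub_eq_zero]
  have h2 : (2:ℂ) ≠ 0 := two_ne_zero
  match_scalars <;> field_simp <;> ring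
end

section
/- Assume in addition λ + μ > 0. Then the Hermitian matrix W·p₁ is positive definite: for every nonzero u ∈ ℂ^{n+1} one has u*·(W·p₁)·u > 0, where W := blockdiag(G⁻¹, 1, 1) and p₁ := [[μs·I_{n−1} + (μ(λ+μ)/((λ+3μ)s))·ξ♯ξᵀ, −(2iμ²/(λ+3μ))·ξ♯, 0], [(2iμ²/(λ+3μ))·ξᵀ, (2μ(λ+2μ)/(λ+3μ))·s, 0], [0, 0, αs]]. -/
noncomputable section

open Matrix

open scoped ComplexOrder

/-!
Reindex `Fin (n + 1)` as `Fin (n - 1) ⊕ Fin 2`. Since `G⁻¹ ξ♯ = ξ`, the matrix `W p₁` becomes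
`[A B; Bᴴ D]` with `A = μs G⁻¹ + μ(λ+μ)/((λ+3μ)s) ξξᵀ`, `B = [-2iμ²/(λ+3μ) ξ, 0]` and
`D = diag(2μ(λ+2μ)s/(λ+3μ), αs)` positive definite, so it is positive definite as soon as the
Schur complement `A - B D⁻¹ Bᴴ = μs G⁻¹ + μλ/((λ+2μ)s) ξξᵀ` is. Cauchy–Schwarz for the inner
product `G⁻¹` gives `(ξ ⬝ x)² ≤ (ξᵀGξ)(xᵀG⁻¹x) = s² xᵀG⁻¹x` (take `ξ♯` as second vector), so this
rank-one perturbation of `μs G⁻¹` stays positive definite: `μs + μλs/(λ+2μ) = 2μs(λ+μ)/(λ+2μ) > 0`.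
-/

namespace Matrix

variable {ι κ : Type*} [Fintype ι] [DecidableEq ι]

theorem inv_diagonal_of_ne_zero {K : Type*} [Field K] {v : ι → K} (hv : ∀ i, v i ≠ 0) :
    (diagonal v)⁻¹ = diagonal v⁻¹ :=
  inv_eq_left_inv <| by
    rw [diagonal_mul_diagonal, ← diagonal_one]
    exact congrArg diagonal (funext fun i => inv_mul_cancel₀ (hv i))

theorem PosDef.fromBlocks₂₂_posDef [Fintype κ] [DecidableEq κ] {𝕜 : Type*} [RCLike 𝕜]
    {A : Matrix ι ι 𝕜} {B : Matrix ι κ 𝕜} {D : Matrix κ κ 𝕜} (hD : D.PosDef)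
    (hS : (A - B * D⁻¹ * Bᴴ).PosDef) : (fromBlocks A B Bᴴ D).PosDef := by
  let := hD.isUnit.invertible
  refine ((PosDef.fromBlocks₂₂ A B hD).2 hS.posSemidef).posDef_iff_det_ne_zero.2 ?_
  rw [det_fromBlocks₂₂, invOf_eq_nonsing_inv]
  exact mul_ne_zero hD.det_pos.ne' hS.det_pos.ne'

open scoped MatrixOrder in
theorem PosDef.map_algebraMap {𝕜 : Type*} [RCLike 𝕜] {A : Matrix ι ι ℝ} (hA : A.PosDef) :
    (A.map (algebraMap ℝ 𝕜)).PosDef := by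
  obtain ⟨B, rfl⟩ := CStarAlgebra.nonneg_iff_eq_star_mul_self.mp hA.posSemidef.nonneg
  have hpsd := posSemidef_conjTranspose_mul_self (B.map (algebraMap ℝ 𝕜))
  rw [← conjTranspose_map _ fun x => (RCLike.conj_ofReal x).symm, ← Matrix.map_mul] at hpsd
  refine hpsd.posDef_iff_det_ne_zero.2 ?_
  rw [← RingHom.mapMatrix_apply, ← RingHom.map_det, ← star_eq_conjTranspose]
  exact (map_ne_zero _).2 hA.det_pos.ne'

omit [DecidableEq ι] in
theorem PosSemidef.sq_dotProduct_mulVec_le {A : Matrix ι ι ℝ} (hA : A.PosSemidef) (x y : ι → ℝ) :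
    (x ⬝ᵥ A *ᵥ y) ^ 2 ≤ (x ⬝ᵥ A *ᵥ x) * (y ⬝ᵥ A *ᵥ y) := by
  have hsymm : Aᵀ = A := (conjTranspose_eq_transpose_of_trivial A).symm.trans hA.isHermitian
  have hyx : y ⬝ᵥ A *ᵥ x = x ⬝ᵥ A *ᵥ y := by
    rw [dotProduct_mulVec, dotProduct_comm, ← mulVec_transpose, hsymm]
  let P : Matrix (Fin 2) ι ℝ := of ![x, y]
  have hgram : P * A * Pᴴ = !![x ⬝ᵥ A *ᵥ x, x ⬝ᵥ A *ᵥ y; y ⬝ᵥ A *ᵥ x, y ⬝ᵥ A *ᵥ y] := by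
    rw [Matrix.mul_assoc]
    ext i j
    fin_cases i <;> fin_cases j <;> simp [P, mul_apply, dotProduct, mulVec]
  have hdet := (hA.mul_mul_conjTranspose_same P).det_nonneg
  rw [hgram, det_fin_two_of, hyx] at hdet
  nlinarith

theorem PosDef.smul_inv_add_smul_vecMulVec {G : Matrix ι ι ℝ} (hG : G.PosDef) (ξ : ι → ℝ)
    {a b : ℝ} (ha : 0 < a) (hab : 0 < a + b * (ξ ⬝ᵥ G *ᵥ ξ)) :
    (a • G⁻¹ + b • vecMulVec ξ ξ).PosDef := by
  have hξξ : (vecMulVec ξ ξ).IsHermitian := by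
    simpa using (posSemidef_vecMulVec_self_star ξ).isHermitian
  refine .of_dotProduct_mulVec_pos
    ((hG.inv.smul ha).isHermitian.add (hξξ.smul (IsSelfAdjoint.all b))) fun x hx => ?_
  have hGξ : G⁻¹ *ᵥ G *ᵥ ξ = ξ := by
    let := hG.isUnit.invertible
    rw [mulVec_mulVec, inv_mul_of_invertible, one_mulVec]
  have hcs := hG.inv.posSemidef.sq_dotProduct_mulVec_le x (G *ᵥ ξ)
  rw [hGξ, dotProduct_comm (G *ᵥ ξ)] at hcs
  have hpos := hG.inv.dotProduct_mulVec_pos hx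
  simp only [star_trivial] at hpos ⊢
  simp only [add_mulVec, smul_mulVec, vecMulVec_mulVec, dotProduct_add, dotProduct_smul,
    smul_eq_mul, op_smul_eq_mul, dotProduct_comm ξ x]
  rcases le_or_gt 0 b with hb | hb
  · nlinarith [sq_nonneg (x ⬝ᵥ ξ)]
  · nlinarith

end Matrix

def blkIndex (n : ℕ) (hn : 1 ≤ n) : Fin (n - 1) ⊕ Fin 2 ≃ Fin (n + 1) :=
  finSumFinEquiv.trans (finCongr (by omega))

theorem blk_submatrix_blkIndex (n : ℕ) (hn : 1 ≤ n) (T : Fin (n - 1) → Fin (n - 1) → ℂ)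
    (colv rowv : Fin (n - 1) → ℂ) (d e : ℂ) :
    (blk n T colv rowv d e).submatrix (blkIndex n hn) (blkIndex n hn) =
      fromBlocks (of T) (of fun a j => ![colv a, 0] j) (of fun i b => ![rowv b, 0] i)
        (diagonal ![d, e]) := by
  ext (a | i) (b | j)
  · simp [blk, blkIndex]
  · fin_cases j <;> simp [blk, blkIndex]
  · have := b.isLt
    fin_cases i <;> simp [blk, blkIndex]
    omega
  · fin_cases i <;> fin_cases j <;> simp [blk, blkIndex] <;> omega

theorem Wmat_submatrix (n : ℕ) (hn : 1 ≤ n) (G : Matrix (Fin (n - 1)) (Fin (n - 1)) ℝ) :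
    (Wmat n G).submatrix (blkIndex n hn) (blkIndex n hn) =
      fromBlocks (G⁻¹.map (algebraMap ℝ ℂ)) 0 0 1 := by
  rw [Wmat, blk_submatrix_blkIndex, ← diagonal_one]
  congr 1
  · ext a j; fin_cases j <;> rfl
  · ext i b; fin_cases i <;> rfl
  · congr 1; ext i; fin_cases i <;> rfl

def imagColumn {ι : Type*} (β : ℝ) (ξ : ι → ℝ) : Matrix ι (Fin 2) ℂ :=
  of fun a j => ![-(Complex.I * ((β * ξ a : ℝ) : ℂ)), 0] j

theorem map_mul_imagColumn {ι κ : Type*} [Fintype κ] (M : Matrix ι κ ℝ) (β : ℝ) (v : κ → ℝ) :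
    M.map (algebraMap ℝ ℂ) * imagColumn β v = imagColumn β (M *ᵥ v) := by
  ext a j
  fin_cases j
  · simp only [imagColumn, Complex.coe_algebraMap, Complex.ofReal_mul, Complex.ofReal_sum,
      mul_apply, map_apply, of_apply, Fin.zero_eta, cons_val_zero, mul_neg, Finset.sum_neg_distrib,
      neg_inj, mulVec, dotProduct, Finset.mul_sum]
    exact Finset.sum_congr rfl fun _ _ => by ring
  · simp [imagColumn, mul_apply]

theorem Wmat_mul_p1mat_submatrix (n : ℕ) (hn : 1 ≤ n) {G : Matrix (Fin (n - 1)) (Fin (n - 1)) ℝ}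
    (hG : IsUnit G.det) (ξ : Fin (n - 1) → ℝ) (s lam mu al : ℝ) :
    (Wmat n G * p1mat n ξ (G *ᵥ ξ) s lam mu al).submatrix (blkIndex n hn) (blkIndex n hn) =
      fromBlocks
        (((mu * s) • G⁻¹ + (mu * (lam + mu) / ((lam + 3 * mu) * s)) • vecMulVec ξ ξ).map
          (algebraMap ℝ ℂ))
        (imagColumn (2 * mu ^ 2 / (lam + 3 * mu)) ξ)
        (imagColumn (2 * mu ^ 2 / (lam + 3 * mu)) ξ)ᴴ
        (diagonal
          ![((2 * mu * (lam + 2 * mu) / (lam + 3 * mu) * s : ℝ) : ℂ), ((al * s : ℝ) : ℂ)]) := by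
  have hGξ : G⁻¹ *ᵥ G *ᵥ ξ = ξ := by rw [mulVec_mulVec, nonsing_inv_mul _ hG, one_mulVec]
  rw [← submatrix_mul_equiv _ _ _ (blkIndex n hn), Wmat_submatrix, p1mat, blk_submatrix_blkIndex,
    fromBlocks_multiply]
  simp only [Matrix.zero_mul, Matrix.one_mul, add_zero, zero_add]
  congr 1
  · have hT : (of fun a b => ((mu * s * (if a = b then 1 else 0)
        + mu * (lam + mu) / ((lam + 3 * mu) * s) * (G *ᵥ ξ) a * ξ b : ℝ) : ℂ)) =
        ((mu * s) • 1 + (mu * (lam + mu) / ((lam + 3 * mu) * s)) • vecMulVec (G *ᵥ ξ) ξ).map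
          (algebraMap ℝ ℂ) := by
      ext a b
      simp [one_apply, vecMulVec_apply, mul_assoc]
    rw [hT, ← Matrix.map_mul, Matrix.mul_add, Matrix.mul_smul, Matrix.mul_smul, Matrix.mul_one,
      mul_vecMulVec, hGξ]
  · exact (map_mul_imagColumn G⁻¹ _ (G *ᵥ ξ)).trans (congrArg _ hGξ)
  · ext i b
    fin_cases i <;> simp [imagColumn]

theorem schur_complement_imagColumn {ι : Type*} [Fintype ι] (M : Matrix ι ι ℝ) (ξ : ι → ℝ)
    (a k β : ℝ) {d e : ℝ} (hd : d ≠ 0) (he : e ≠ 0) :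
    (a • M + k • vecMulVec ξ ξ).map (algebraMap ℝ ℂ)
        - imagColumn β ξ * (diagonal ![(d : ℂ), (e : ℂ)])⁻¹ * (imagColumn β ξ)ᴴ
      = (a • M + (k - β ^ 2 / d) • vecMulVec ξ ξ).map (algebraMap ℝ ℂ) := by
  rw [inv_diagonal_of_ne_zero (by simp [Fin.forall_fin_two, hd, he])]
  ext i j
  simp [imagColumn, mul_apply, Fin.sum_univ_two, vecMulVec_apply]
  linear_combination ((β : ℂ) ^ 2 * ξ i * ξ j / d) * Complex.I_sq

theorem schur_complement_coeff {s lam mu : ℝ} (hs : s ≠ 0) (hmu : mu ≠ 0) (hl2 : lam + 2 * mu ≠ 0)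
    (hl3 : lam + 3 * mu ≠ 0) :
    mu * (lam + mu) / ((lam + 3 * mu) * s)
        - (2 * mu ^ 2 / (lam + 3 * mu)) ^ 2 / (2 * mu * (lam + 2 * mu) / (lam + 3 * mu) * s)
      = mu * lam / ((lam + 2 * mu) * s) := by
  rw [div_sub_div _ _ (by simp [*]) (by simp [*]), div_eq_div_iff (by simp [*]) (by simp [*])]
  field_simp
  ring

theorem schur_complement_posDef {ι : Type*} [Fintype ι] [DecidableEq ι] {G : Matrix ι ι ℝ}
    (hG : G.PosDef) {ξ : ι → ℝ} {s lam mu : ℝ} (hξ : ξ ⬝ᵥ G *ᵥ ξ = s ^ 2) (hs : 0 < s)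
    (hmu : 0 < mu) (hlm : 0 < lam + mu) :
    ((mu * s) • G⁻¹ + (mu * lam / ((lam + 2 * mu) * s)) • vecMulVec ξ ξ).PosDef := by
  have hl2 : 0 < lam + 2 * mu := by linarith
  refine hG.smul_inv_add_smul_vecMulVec ξ (by positivity) ?_
  rw [hξ, div_mul_eq_mul_div, add_div' _ _ _ (by positivity),
    show mu * s * ((lam + 2 * mu) * s) + mu * lam * s ^ 2 = 2 * mu * s ^ 2 * (lam + mu) by ring]
  positivity

theorem stmt11_general (n : ℕ)
    (G : Matrix (Fin (n-1)) (Fin (n-1)) ℝ) (hG : G.PosDef)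
    (ξ : Fin (n-1) → ℝ) (hξ : ξ ≠ 0)
    (ξs : Fin (n-1) → ℝ) (hξs : ξs = G.mulVec ξ)
    (s : ℝ) (hs : s = Real.sqrt (ξ ⬝ᵥ G.mulVec ξ))
    (lam mu : ℝ) (hmu : 0 < mu)
    (al : ℝ) (hal : 0 < al) (hlm' : 0 < lam + mu) :
    (Wmat n G * p1mat n ξ ξs s lam mu al).PosDef := by
  subst hξs
  have hn : 1 ≤ n := by
    by_contra h
    exact hξ (funext fun a => absurd a.isLt (by omega))
  have hξGξ : 0 < ξ ⬝ᵥ G *ᵥ ξ := by simpa using hG.dotProduct_mulVec_pos hξ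
  have hs_pos : 0 < s := hs ▸ Real.sqrt_pos.2 hξGξ
  have hs_sq : ξ ⬝ᵥ G *ᵥ ξ = s ^ 2 := by rw [hs, Real.sq_sqrt hξGξ.le]
  have hl2 : 0 < lam + 2 * mu := by linarith
  have hl3 : 0 < lam + 3 * mu := by linarith
  suffices hM : ((Wmat n G * p1mat n ξ (G *ᵥ ξ) s lam mu al).submatrix (blkIndex n hn)
      (blkIndex n hn)).PosDef by
    simpa using hM.submatrix (blkIndex n hn).symm.injective
  rw [Wmat_mul_p1mat_submatrix n hn (isUnit_iff_ne_zero.2 hG.det_pos.ne')]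
  refine PosDef.fromBlocks₂₂_posDef (posDef_diagonal_iff.2 ?_) ?_
  · simp only [Fin.forall_fin_two, cons_val_zero, cons_val_one, Complex.zero_lt_real]
    constructor <;> positivity
  · rw [schur_complement_imagColumn _ _ _ _ _ (by positivity) (by positivity),
      schur_complement_coeff hs_pos.ne' hmu.ne' hl2.ne' hl3.ne']
    exact (schur_complement_posDef hG hs_sq hs_pos hmu hlm').map_algebraMap

/-- if moreover λ + μ > 0, the Hermitian matrix W·p₁ is positive definite. -/
theorem stmt11 (n : ℕ) (hn : 2 ≤ n)
    (G : Matrix (Fin (n-1)) (Fin (n-1)) ℝ) (hG : G.PosDef)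
    (ξ : Fin (n-1) → ℝ) (hξ : ξ ≠ 0)
    (ξs : Fin (n-1) → ℝ) (hξs : ξs = G.mulVec ξ)
    (s : ℝ) (hs : s = Real.sqrt (ξ ⬝ᵥ G.mulVec ξ))
    (lam mu : ℝ) (hmu : 0 < mu) (hlm : 0 ≤ lam + mu)
    (c : ℝ) (hc : c = (lam + mu)/(lam + 3*mu)) (al : ℝ) (hal : 0 < al) (hlm' : 0 < lam + mu) :
    (Wmat n G * p1mat n ξ ξs s lam mu al).PosDef :=
  stmt11_general n G hG ξ hξ ξs hξs s hs lam mu hmu al hal hlm'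
end
end

section
/- The determinant of the principal symbol is det p₁ = 4·α·μⁿ·((λ+μ)/(λ+3μ))·s^{n+1}, where p₁ := [[μs·I_{n−1} + (μ(λ+μ)/((λ+3μ)s))·ξ♯ξᵀ, −(2iμ²/(λ+3μ))·ξ♯, 0], [(2iμ²/(λ+3μ))·ξᵀ, (2μ(λ+2μ)/(λ+3μ))·s, 0], [0, 0, αs]]. In particular p₁ is invertible if and only if λ + μ ≠ 0. -/
noncomputable section

open Matrix

/-! The matrix `p₁` is block diagonal: the thermal entry `αs` splits off, leaving the elastic block
`[[T, c], [r, d]]` with `d = 2μ(λ+2μ)s/(λ+3μ)`. The Schur complement of `d` in it is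
`μs·I + (μλ/((λ+2μ)s)) ξ♯ξᵀ`, a rank-one perturbation of a multiple of the identity, so by the
matrix determinant lemma and `ξᵀξ♯ = s²` its determinant is `(μs)^(n-1) · 2(λ+μ)/(λ+2μ)`. -/

namespace Matrix

variable {K m ι : Type*} [Field K] [Fintype m] [DecidableEq m]

theorem det_fromBlocks_replicateCol_replicateRow [Unique ι] [Fintype ι] [DecidableEq ι]
    (A : Matrix m m K) (c r : m → K) {d : K} (hd : d ≠ 0) :
    (fromBlocks A (replicateCol ι c) (replicateRow ι r) (of fun _ _ => d)).det =
      d * (A - d⁻¹ • vecMulVec c r).det := by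
  have hinv : (of fun _ _ => d : Matrix ι ι K) * of (fun _ _ => d⁻¹) = 1 := by
    ext i j
    obtain rfl := Subsingleton.elim i j
    simp [mul_apply, hd]
  let _ := invertibleOfRightInverse _ _ hinv
  rw [det_fromBlocks₂₂, invOf_eq_right_inv hinv, det_unique]
  congr 2
  ext i j
  simp [mul_apply, vecMulVec_apply]
  ring

theorem det_smul_one_add_vecMulVec {a : K} (ha : a ≠ 0) (u v : m → K) :
    (a • 1 + vecMulVec u v).det = a ^ Fintype.card m * (1 + a⁻¹ * (v ⬝ᵥ u)) := by
  have : a • 1 + vecMulVec u v = a • (1 + replicateCol Unit (a⁻¹ • u) * replicateRow Unit v) := by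
    rw [← vecMulVec_eq, smul_add, smul_vecMulVec, smul_smul, mul_inv_cancel₀ ha, one_smul]
  rw [this, det_smul, det_one_add_replicateCol_mul_replicateRow, dotProduct_smul, smul_eq_mul]

end Matrix

def blkEquiv (k : ℕ) : (Fin k ⊕ Fin 1) ⊕ Fin 1 ≃ Fin (k + 1 + 1) :=
  (finSumFinEquiv.sumCongr (Equiv.refl _)).trans finSumFinEquiv

section Blk

variable {k : ℕ} (T : Fin k → Fin k → ℂ) (c r : Fin k → ℂ)

theorem blk_submatrix_blkEquiv (d e : ℂ) :
    (blk (k + 1) T c r d e).submatrix (blkEquiv k) (blkEquiv k) =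
      fromBlocks (fromBlocks (of T) (replicateCol (Fin 1) c) (replicateRow (Fin 1) r)
        (of fun _ _ => d)) 0 0 (of fun _ _ => e) := by
  ext ((i | i) | i) ((j | j) | j) <;>
    simp only [blkEquiv, blk, submatrix_apply, Equiv.trans_apply, Equiv.sumCongr_apply,
      Sum.map_inl, Sum.map_inr, Equiv.refl_apply, finSumFinEquiv_apply_left,
      finSumFinEquiv_apply_right, Fin.val_castAdd, Fin.val_natAdd, of_apply, fromBlocks_apply₁₁,
      fromBlocks_apply₁₂, fromBlocks_apply₂₁, fromBlocks_apply₂₂, replicateCol_apply,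
      replicateRow_apply, Matrix.zero_apply, Fin.val_eq_zero, Nat.add_one_sub_one] <;>
    split_ifs <;> first | rfl | omega

theorem det_blk {d : ℂ} (hd : d ≠ 0) (e : ℂ) :
    (blk (k + 1) T c r d e).det = d * e * (of T - d⁻¹ • vecMulVec c r).det := by
  rw [← det_submatrix_equiv_self (blkEquiv k), blk_submatrix_blkEquiv, det_fromBlocks_zero₂₁,
    det_fromBlocks_replicateCol_replicateRow _ _ _ hd, det_unique (of fun _ _ => e), of_apply]
  ring

end Blk

section PrincipalSymbol

variable {k : ℕ} (ξ ξs : Fin k → ℝ) {s lam mu : ℝ}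

theorem p1mat_schur_complement (hs : s ≠ 0) (hmu : mu ≠ 0) (h2 : lam + 2 * mu ≠ 0)
    (h3 : lam + 3 * mu ≠ 0) :
    of (fun a b => ((mu * s * (if a = b then 1 else 0)
        + mu * (lam + mu) / ((lam + 3 * mu) * s) * ξs a * ξ b : ℝ) : ℂ)) -
      ((2 * mu * (lam + 2 * mu) / (lam + 3 * mu) * s : ℝ) : ℂ)⁻¹ •
        vecMulVec (fun a => -(Complex.I * ((2 * mu ^ 2 / (lam + 3 * mu) * ξs a : ℝ) : ℂ)))
          (fun b => Complex.I * ((2 * mu ^ 2 / (lam + 3 * mu) * ξ b : ℝ) : ℂ)) =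
      ((mu * s : ℝ) : ℂ) • 1 +
        vecMulVec (fun a => (ξs a : ℂ))
          (fun b => ((mu * lam / ((lam + 2 * mu) * s) * ξ b : ℝ) : ℂ)) := by
  have hcoeff : mu * (lam + mu) / ((lam + 3 * mu) * s) -
      (2 * mu ^ 2 / (lam + 3 * mu)) ^ 2 / (2 * mu * (lam + 2 * mu) / (lam + 3 * mu) * s) =
      mu * lam / ((lam + 2 * mu) * s) := by
    have h2' : lam + mu * 2 ≠ 0 := by rwa [mul_comm]
    have h3' : lam + mu * 3 ≠ 0 := by rwa [mul_comm]
    field_simp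
    ring
  ext a b
  have hI : -(Complex.I * (2 * mu ^ 2 / (lam + 3 * mu) * ξs a : ℝ)) *
      (Complex.I * (2 * mu ^ 2 / (lam + 3 * mu) * ξ b : ℝ)) =
      (((2 * mu ^ 2 / (lam + 3 * mu)) ^ 2 * ξs a * ξ b : ℝ) : ℂ) := by
    push_cast
    ring_nf
    rw [Complex.I_sq]
    ring
  have key (δ : ℝ) : mu * s * δ + mu * (lam + mu) / ((lam + 3 * mu) * s) * ξs a * ξ b -
      (2 * mu * (lam + 2 * mu) / (lam + 3 * mu) * s)⁻¹ *
        ((2 * mu ^ 2 / (lam + 3 * mu)) ^ 2 * ξs a * ξ b) =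
      mu * s * δ + ξs a * (mu * lam / ((lam + 2 * mu) * s) * ξ b) := by
    rw [← hcoeff]
    ring
  simp only [Matrix.sub_apply, of_apply, Matrix.smul_apply, vecMulVec_apply, hI, Matrix.add_apply,
    one_apply, smul_eq_mul]
  split_ifs <;> exact_mod_cast key _

theorem det_p1mat (al : ℝ) (hs : s ≠ 0) (hmu : mu ≠ 0) (h2 : lam + 2 * mu ≠ 0)
    (h3 : lam + 3 * mu ≠ 0) (hsum : ξ ⬝ᵥ ξs = s ^ 2) :
    (p1mat (k + 1) ξ ξs s lam mu al).det =
      ((4 * al * mu ^ (k + 1) * ((lam + mu) / (lam + 3 * mu)) * s ^ (k + 1 + 1) : ℝ) : ℂ) := by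
  have hd : 2 * mu * (lam + 2 * mu) / (lam + 3 * mu) * s ≠ 0 := by
    positivity
  have hdot : (fun b => ((mu * lam / ((lam + 2 * mu) * s) * ξ b : ℝ) : ℂ)) ⬝ᵥ
      (fun a => (ξs a : ℂ)) = ((mu * lam / ((lam + 2 * mu) * s) * s ^ 2 : ℝ) : ℂ) := by
    rw [← hsum, dotProduct, dotProduct, Finset.mul_sum]
    push_cast
    simp only [mul_assoc]
  have hreal : 2 * mu * (lam + 2 * mu) / (lam + 3 * mu) * s * (al * s) *
      ((mu * s) ^ k * (1 + (mu * s)⁻¹ * (mu * lam / ((lam + 2 * mu) * s) * s ^ 2))) =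
      4 * al * mu ^ (k + 1) * ((lam + mu) / (lam + 3 * mu)) * s ^ (k + 1 + 1) := by
    field_simp
    ring
  rw [p1mat, det_blk _ _ _ (Complex.ofReal_ne_zero.mpr hd)]
  -- the unfolded blocks are indexed by `Fin (k + 1 - 1)`, which is `Fin k` only up to defeq
  erw [p1mat_schur_complement ξ ξs hs hmu h2 h3]
  rw [det_smul_one_add_vecMulVec (Complex.ofReal_ne_zero.mpr (mul_ne_zero hmu hs)),
    Fintype.card_fin, hdot]
  exact_mod_cast hreal

end PrincipalSymbol

theorem stmt13_general (n : ℕ) (hn : 2 ≤ n)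
    (G : Matrix (Fin (n-1)) (Fin (n-1)) ℝ) (hG : G.PosDef)
    (ξ : Fin (n-1) → ℝ) (hξ : ξ ≠ 0)
    (ξs : Fin (n-1) → ℝ) (hξs : ξs = G.mulVec ξ)
    (s : ℝ) (hs : s = Real.sqrt (ξ ⬝ᵥ G.mulVec ξ))
    (lam mu : ℝ) (hmu : 0 < mu) (hlm : 0 ≤ lam + mu)
    (al : ℝ) (hal : 0 < al) :
    (p1mat n ξ ξs s lam mu al).det
        = ((4 * al * mu^n * ((lam + mu)/(lam + 3*mu)) * s^(n+1) : ℝ) : ℂ)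
    ∧ (IsUnit (p1mat n ξ ξs s lam mu al) ↔ lam + mu ≠ 0) := by
  obtain ⟨k, rfl⟩ : ∃ k, n = k + 1 := ⟨n - 1, by omega⟩
  have h3 : 0 < lam + 3 * mu := by linarith
  have hq : 0 < ξ ⬝ᵥ G *ᵥ ξ := by simpa using hG.dotProduct_mulVec_pos hξ
  have hspos : 0 < s := hs ▸ Real.sqrt_pos.mpr hq
  have hsum : ξ ⬝ᵥ ξs = s ^ 2 := by rw [hξs, hs, Real.sq_sqrt hq.le]
  have hdet := det_p1mat (k := k) ξ ξs al hspos.ne' hmu.ne' (by linarith) h3.ne' hsum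
  refine ⟨hdet, ?_⟩
  rw [isUnit_iff_isUnit_det, hdet, isUnit_iff_ne_zero, Complex.ofReal_ne_zero]
  simp [hal.ne', hmu.ne', hspos.ne', h3.ne']

/-- det p₁ = 4αμⁿ((λ+μ)/(λ+3μ))s^(n+1); p₁ invertible iff λ + μ ≠ 0. -/
theorem stmt13 (n : ℕ) (hn : 2 ≤ n)
    (G : Matrix (Fin (n-1)) (Fin (n-1)) ℝ) (hG : G.PosDef)
    (ξ : Fin (n-1) → ℝ) (hξ : ξ ≠ 0)
    (ξs : Fin (n-1) → ℝ) (hξs : ξs = G.mulVec ξ)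
    (s : ℝ) (hs : s = Real.sqrt (ξ ⬝ᵥ G.mulVec ξ))
    (lam mu : ℝ) (hmu : 0 < mu) (hlm : 0 ≤ lam + mu)
    (c : ℝ) (hc : c = (lam + mu)/(lam + 3*mu)) (al : ℝ) (hal : 0 < al) :
    (p1mat n ξ ξs s lam mu al).det
        = ((4 * al * mu^n * ((lam + mu)/(lam + 3*mu)) * s^(n+1) : ℝ) : ℂ)
    ∧ (IsUnit (p1mat n ξ ξs s lam mu al) ↔ lam + mu ≠ 0) :=
  stmt13_general n hn G hG ξ hξ ξs hξs s hs lam mu hmu hlm al hal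
end
end
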